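/- arXiv:2207.07824 — 5 statements merged into one kernel-verified Lean document; each statement's English description precedes it below -/
import Mathlib

section
/- Let ℓ ≥ 0 and m ≥ 0, and let F : ℝⁿ → ℝⁿ be Lipschitz with constant ℓ with respect to the supremum norm and satisfy ‖F(y)‖ ≤ m for all y ∈ ℝⁿ. Let t₀ ∈ ℝ and ε > 0, and let x : ℝ → ℝⁿ satisfy, for every t in the closed interval [t₀, t₀+ε], that x has derivative F(x(t)) at t. Then ‖x(t₀+ε) − x(t₀) − ε·F(x(t₀))‖ ≤ m·ℓ·ε²; that is, x(t₀+ε) lies in the set G_ε(x(t₀)) = x(t₀) + ε·(F(x(t₀)) + m·ℓ·ε·B̄), where B̄ is the closed unit ball. -/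
open Set

/-- Lemma 2 of the paper: the one-step set-valued map `G_ε` contains the trajectory of
the ODE `ẋ = F(x)` for any duration `ε`, i.e.
`‖x(t₀+ε) − x(t₀) − ε·F(x(t₀))‖ ≤ m·ℓ·ε²`. -/
theorem euler_step_contains_trajectory
    (n : ℕ) (ℓ m : ℝ) (hℓ : 0 ≤ ℓ) (hm : 0 ≤ m)
    (F : (Fin n → ℝ) → (Fin n → ℝ))
    (hLip : ∀ y z : Fin n → ℝ, ‖F y - F z‖ ≤ ℓ * ‖y - z‖)
    (hbdd : ∀ y : Fin n → ℝ, ‖F y‖ ≤ m)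
    (t₀ ε : ℝ) (hε : 0 < ε)
    (x : ℝ → (Fin n → ℝ))
    (hderiv : ∀ t ∈ Icc t₀ (t₀ + ε), HasDerivAt x (F (x t)) t) :
    ‖x (t₀ + ε) - x t₀ - ε • F (x t₀)‖ ≤ m * ℓ * ε ^ 2 := by
  set s : Set ℝ := Icc t₀ (t₀ + ε) with hs
  have hconv : Convex ℝ s := convex_Icc _ _
  have ht₀ : t₀ ∈ s := by constructor <;> simp [hε.le]
  have ht₁ : t₀ + ε ∈ s := by constructor <;> simp [hε.le]
  -- Step 1: ‖x t - x t₀‖ ≤ m * ε for t ∈ s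
  have hx_bound : ∀ t ∈ s, ‖x t - x t₀‖ ≤ m * ε := by
    intro t ht
    have h1 : ‖x t - x t₀‖ ≤ m * ‖t - t₀‖ :=
      hconv.norm_image_sub_le_of_norm_hasDerivWithin_le
        (fun u hu => (hderiv u hu).hasDerivWithinAt)
        (fun u _ => hbdd (x u)) ht₀ ht
    have h2 : ‖t - t₀‖ ≤ ε := by
      rw [Real.norm_eq_abs, abs_le]
      constructor <;> [linarith [ht.1]; linarith [ht.2]]
    calc ‖x t - x t₀‖ ≤ m * ‖t - t₀‖ := h1
      _ ≤ m * ε := by nlinarith [norm_nonneg (t - t₀)]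
  -- Step 2: apply MVT to g t = x t - x t₀ - (t - t₀) • F (x t₀)
  set g : ℝ → (Fin n → ℝ) := fun t => x t - x t₀ - (t - t₀) • F (x t₀) with hg
  have hgderiv : ∀ t ∈ s, HasDerivWithinAt g (F (x t) - F (x t₀)) s t := by
    intro t ht
    have h1 : HasDerivAt (fun t : ℝ => (t - t₀) • F (x t₀)) (F (x t₀)) t := by
      simpa using ((hasDerivAt_id t).sub_const t₀).smul_const (F (x t₀))
    exact (((hderiv t ht).sub_const (x t₀)).sub h1).hasDerivWithinAt
  have hgbound : ∀ t ∈ s, ‖F (x t) - F (x t₀)‖ ≤ ℓ * (m * ε) := by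
    intro t ht
    calc ‖F (x t) - F (x t₀)‖ ≤ ℓ * ‖x t - x t₀‖ := hLip _ _
      _ ≤ ℓ * (m * ε) := by nlinarith [hx_bound t ht, norm_nonneg (x t - x t₀)]
  have key : ‖g (t₀ + ε) - g t₀‖ ≤ ℓ * (m * ε) * ‖(t₀ + ε) - t₀‖ :=
    hconv.norm_image_sub_le_of_norm_hasDerivWithin_le hgderiv hgbound ht₀ ht₁
  have hg0 : g t₀ = 0 := by simp [hg]
  have hg1 : g (t₀ + ε) = x (t₀ + ε) - x t₀ - ε • F (x t₀) := by simp [hg]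
  rw [hg0, sub_zero, hg1] at key
  have : ‖(t₀ + ε) - t₀‖ = ε := by
    rw [Real.norm_eq_abs]; rw [abs_of_pos] <;> [ring_nf; linarith]
  rw [this] at key
  calc ‖x (t₀ + ε) - x t₀ - ε • F (x t₀)‖ ≤ ℓ * (m * ε) * ε := key
    _ = m * ℓ * ε ^ 2 := by ring
end

section
/- Let ℓ ≥ 0, let F : ℝⁿ → ℝⁿ be Lipschitz with constant ℓ with respect to the supremum norm, and let ε > 0, h > 0, r ≥ 0. Let x, x̃ ∈ ℝⁿ with ‖x̃ − x‖ ≤ h, let y ∈ ℝⁿ with ‖y − (x̃ + ε·F(x̃))‖ ≤ r, and let z ∈ ℝⁿ with ‖z − y‖ ≤ h. Then ‖z − (x + ε·F(x))‖ ≤ r + 2·(1 + ℓ·ε)·h. -/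
/-- Quantitative content of Lemma 4 of the paper: if `y` lies in the one-step forward
ball `closedBall(x̃ + ε·F(x̃), r)` with `‖x̃ − x‖ ≤ h`, then any point within `h` of `y`
lies in the dilated forward ball `closedBall(x + ε·F(x), r + 2(1+ℓε)h)`. -/
theorem dilated_forward_set_containment
    (n : ℕ) (ℓ : ℝ) (hℓ : 0 ≤ ℓ)
    (F : (Fin n → ℝ) → (Fin n → ℝ))
    (hLip : ∀ y z : Fin n → ℝ, ‖F y - F z‖ ≤ ℓ * ‖y - z‖)
    (ε h r : ℝ) (hε : 0 < ε) (hh : 0 < h) (hr : 0 ≤ r)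
    (x xtil y z : Fin n → ℝ)
    (hx : ‖xtil - x‖ ≤ h)
    (hy : ‖y - (xtil + ε • F xtil)‖ ≤ r)
    (hz : ‖z - y‖ ≤ h) :
    ‖z - (x + ε • F x)‖ ≤ r + 2 * (1 + ℓ * ε) * h := by
  have key : z - (x + ε • F x) =
      (z - y) + (y - (xtil + ε • F xtil)) + (xtil - x) + ε • (F xtil - F x) := by
    module
  rw [key]
  have h1 : ‖ε • (F xtil - F x)‖ ≤ ε * (ℓ * h) := by
    rw [norm_smul, Real.norm_of_nonneg hε.le]
    exact mul_le_mul_of_nonneg_left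
      ((hLip _ _).trans (mul_le_mul_of_nonneg_left hx hℓ)) hε.le
  calc ‖(z - y) + (y - (xtil + ε • F xtil)) + (xtil - x) + ε • (F xtil - F x)‖
      ≤ ‖(z - y) + (y - (xtil + ε • F xtil)) + (xtil - x)‖ + ‖ε • (F xtil - F x)‖ :=
        norm_add_le _ _
    _ ≤ (‖(z - y) + (y - (xtil + ε • F xtil))‖ + ‖xtil - x‖) + ‖ε • (F xtil - F x)‖ := by
        gcongr; exact norm_add_le _ _
    _ ≤ ((‖z - y‖ + ‖y - (xtil + ε • F xtil)‖) + ‖xtil - x‖) + ‖ε • (F xtil - F x)‖ := by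
        gcongr; exact norm_add_le _ _
    _ ≤ ((h + r) + h) + ε * (ℓ * h) := by gcongr
    _ ≤ r + 2 * (1 + ℓ * ε) * h := by nlinarith [mul_nonneg (mul_nonneg hℓ hε.le) hh.le]
end

section
/- Let q be a natural number, let A be a nonempty closed subset of ℝ^q, let h > 0 and Δ > h/2, and let y ∈ ℝ^q satisfy infDist(y, A) < Δ, where infDist is the infimum distance with respect to the supremum norm. Then there exists a grid point x̌ ∈ hℤ^q such that ‖x̌ − y‖ ≤ h and infDist(x̌, A) < Δ. -/
open Metric

/-- Coordinate-wise floor/ceiling selection (core of Lemma 5 of the paper): near any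
point whose distance to a closed set `A` is less than `Δ > h/2`, there is a grid point
of `hℤ^q` within distance `h` that is still within distance `Δ` of `A`. -/
theorem grid_point_near_obstacle
    (q : ℕ) (A : Set (Fin q → ℝ)) (hAne : A.Nonempty) (hAcl : IsClosed A)
    (h Δ : ℝ) (hh : 0 < h) (hΔ : h / 2 < Δ)
    (y : Fin q → ℝ) (hy : infDist y A < Δ) :
    ∃ xc : Fin q → ℝ, (∀ i, ∃ k : ℤ, xc i = k * h) ∧ ‖xc - y‖ ≤ h ∧ infDist xc A < Δ := by
  obtain ⟨a, haA, hay⟩ := (infDist_lt_iff hAne).mp hy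
  have hΔpos : 0 < Δ := lt_of_le_of_lt (by positivity) hΔ
  set xc : Fin q → ℝ := fun i =>
    if ((⌊y i / h⌋ : ℝ) * h + (⌈y i / h⌉ : ℝ) * h) / 2 ≤ a i
      then (⌈y i / h⌉ : ℝ) * h else (⌊y i / h⌋ : ℝ) * h with hxc
  have key : ∀ i, (⌊y i / h⌋ : ℝ) * h ≤ y i ∧ y i ≤ (⌈y i / h⌉ : ℝ) * h ∧
      (⌈y i / h⌉ : ℝ) * h ≤ (⌊y i / h⌋ : ℝ) * h + h := by
    intro i
    refine ⟨?_, ?_, ?_⟩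
    · rw [← le_div_iff₀ hh]; exact Int.floor_le _
    · rw [← div_le_iff₀ hh]; exact Int.le_ceil _
    · have : (⌈y i / h⌉ : ℝ) ≤ (⌊y i / h⌋ : ℝ) + 1 := by
        exact_mod_cast Int.ceil_le_floor_add_one _
      nlinarith
  refine ⟨xc, fun i => ?_, ?_, ?_⟩
  · simp only [hxc]
    split <;> exact ⟨_, rfl⟩
  · rw [pi_norm_le_iff_of_nonneg hh.le]
    intro i
    obtain ⟨h1, h2, h3⟩ := key i
    simp only [Pi.sub_apply, hxc, Real.norm_eq_abs, abs_le]
    split <;> constructor <;> linarith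
  · refine lt_of_le_of_lt (infDist_le_dist_of_mem haA) ?_
    rw [dist_eq_norm, pi_norm_lt_iff hΔpos]
    intro i
    have hia : |y i - a i| < Δ := by
      have h1 := norm_le_pi_norm (y - a) i
      simp only [Pi.sub_apply, Real.norm_eq_abs] at h1
      rw [dist_eq_norm] at hay
      linarith
    obtain ⟨h1, h2, h3⟩ := key i
    rw [abs_lt] at hia
    simp only [Pi.sub_apply, hxc, Real.norm_eq_abs, abs_lt]
    split <;> rename_i hsplit <;> constructor <;> [skip; skip; skip; skip] <;>
      first
      | linarith
      | (push_neg at hsplit; linarith)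
  done
end

section
/- Let q, r be natural numbers and equip E = (Fin q → ℝ) × (Fin r → ℝ) with the norm ‖(a,b)‖ = max(‖a‖∞, ‖b‖∞), where ‖·‖∞ is the supremum norm on each factor. Let A be a nonempty closed subset of ℝ^q, let h > 0, Δ > h/2, ρ ≥ 0, and c ∈ E. Suppose that every point z = (z_q, z_r) ∈ E, all of whose coordinates (in both components) are integer multiples of h, with ‖z − c‖ ≤ ρ + h, satisfies infDist(z_q, A) ≥ Δ (infimum distance in the supremum norm on ℝ^q). Then every y = (y_q, y_r) ∈ E with ‖y − c‖ ≤ ρ satisfies infDist(y_q, A) ≥ Δ. -/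
/-!
If `y` in the ball had an obstacle point `a` with `dist y.1 a < Δ`, walk from `y` towards
`(a, y.2)` by `h/2` (or all the way, if closer) and round to the nearest grid point. Rounding
moves by at most `h/2`, so the grid point lies within `h` of `y`, hence in the dilated ball,
and within `max (h/2) (dist y.1 a) < Δ` of `a` in position, contradicting grid safety.
-/

open Metric

def gridPoints (ι : Type*) (h : ℝ) : Set (ι → ℝ) :=
  {z | ∀ i, ∃ k : ℤ, z i = k * h}

theorem abs_round_div_mul_sub_le {h : ℝ} (hh : 0 < h) (x : ℝ) :
    |round (x / h) * h - x| ≤ h / 2 := by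
  have hx : round (x / h) * h - x = -(x / h - round (x / h)) * h := by
    field_simp; ring
  rw [hx, abs_mul, abs_neg, abs_of_pos hh]
  nlinarith [abs_sub_round (x / h)]

theorem exists_mem_gridPoints_dist_le {ι : Type*} [Fintype ι] {h : ℝ} (hh : 0 < h)
    (x : ι → ℝ) : ∃ z ∈ gridPoints ι h, dist z x ≤ h / 2 :=
  ⟨fun i ↦ round (x i / h) * h, fun i ↦ ⟨_, rfl⟩,
    (dist_pi_le_iff (by positivity)).2 fun i ↦ by
      rw [Real.dist_eq]; exact abs_round_div_mul_sub_le hh (x i)⟩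

theorem exists_mem_prod_dist_le {X Y : Type*} [PseudoMetricSpace X] [PseudoMetricSpace Y]
    {s : Set X} {t : Set Y} {δ : ℝ} (hs : ∀ x, ∃ z ∈ s, dist z x ≤ δ)
    (ht : ∀ y, ∃ z ∈ t, dist z y ≤ δ) (p : X × Y) : ∃ z ∈ s ×ˢ t, dist z p ≤ δ := by
  obtain ⟨z₁, hz₁, hd₁⟩ := hs p.1
  obtain ⟨z₂, hz₂, hd₂⟩ := ht p.2
  exact ⟨(z₁, z₂), ⟨hz₁, hz₂⟩, max_le hd₁ hd₂⟩

theorem exists_dist_le_and_add_dist_le_max {E : Type*} [NormedAddCommGroup E]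
    [NormedSpace ℝ E] (x w : E) {δ : ℝ} (hδ : 0 ≤ δ) :
    ∃ p, dist p x ≤ δ ∧ δ + dist p w ≤ max δ (dist x w) := by
  rcases le_or_gt (dist x w) δ with hxw | hxw
  · exact ⟨w, by rwa [dist_comm], by simp [hxw]⟩
  have hd : 0 < dist x w := hδ.trans_lt hxw
  have hθ : δ / dist x w ≤ 1 := (div_le_one hd).2 hxw.le
  refine ⟨AffineMap.lineMap x w (δ / dist x w), ?_, ?_⟩
  · rw [dist_lineMap_left, Real.norm_of_nonneg (by positivity), div_mul_cancel₀ _ hd.ne']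
  · rw [dist_lineMap_right, Real.norm_of_nonneg (sub_nonneg.2 hθ), max_eq_right hxw.le,
      sub_mul, one_mul, div_mul_cancel₀ _ hd.ne']
    linarith

/-- Round the point at distance `δ` from `x` on the segment towards `w`. -/
theorem exists_mem_dist_le_and_dist_le_max {E : Type*} [NormedAddCommGroup E]
    [NormedSpace ℝ E] {G : Set E} {δ : ℝ} (hδ : 0 ≤ δ) (hG : ∀ p, ∃ z ∈ G, dist z p ≤ δ)
    (x w : E) : ∃ z ∈ G, dist z x ≤ 2 * δ ∧ dist z w ≤ max δ (dist x w) := by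
  obtain ⟨p, hpx, hpw⟩ := exists_dist_le_and_add_dist_le_max x w hδ
  obtain ⟨z, hzG, hzp⟩ := hG p
  refine ⟨z, hzG, ?_, ?_⟩
  · linarith [dist_triangle z p x]
  · linarith [dist_triangle z p w]

theorem ball_safe_from_grid_safe_general
    (q r : ℕ) (A : Set (Fin q → ℝ)) (hAne : A.Nonempty)
    (h Δ ρ : ℝ) (hh : 0 < h) (hΔ : h / 2 < Δ)
    (c : (Fin q → ℝ) × (Fin r → ℝ))
    (hgrid : ∀ z : (Fin q → ℝ) × (Fin r → ℝ),
      (∀ i, ∃ k : ℤ, z.1 i = k * h) → (∀ i, ∃ k : ℤ, z.2 i = k * h) →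
      ‖z - c‖ ≤ ρ + h → Δ ≤ infDist z.1 A) :
    ∀ y : (Fin q → ℝ) × (Fin r → ℝ), ‖y - c‖ ≤ ρ → Δ ≤ infDist y.1 A := by
  intro y hy
  by_contra! hlt
  obtain ⟨a, ha, hya⟩ := (infDist_lt_iff hAne).1 hlt
  obtain ⟨z, ⟨hz₁, hz₂⟩, hzy, hza⟩ := exists_mem_dist_le_and_dist_le_max (by positivity)
    (exists_mem_prod_dist_le (exists_mem_gridPoints_dist_le hh)
      (exists_mem_gridPoints_dist_le hh)) y (a, y.2)
  have hzc : ‖z - c‖ ≤ ρ + h := by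
    rw [← dist_eq_norm] at hy ⊢
    linarith [dist_triangle z y c]
  have hza₁ : dist z.1 a ≤ max (h / 2) (dist y.1 a) := by
    simpa [Prod.dist_eq] using (le_max_left _ _).trans hza
  linarith [hgrid z hz₁ hz₂ hzc, infDist_le_dist_of_mem (x := z.1) ha, max_lt hΔ hya]

/-- Lemma 5 of the paper stated for a closed ball: if all grid points in the `h`-dilation
of the ball `closedBall(c, ρ)` keep position-distance at least `Δ > h/2` from the closed
obstacle set `A`, then every point of the ball keeps position-distance at least `Δ`
from `A`. States are pairs (position in `ℝ^q`, rest in `ℝ^r`) with the max norm. -/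
theorem ball_safe_from_grid_safe
    (q r : ℕ) (A : Set (Fin q → ℝ)) (hAne : A.Nonempty) (hAcl : IsClosed A)
    (h Δ ρ : ℝ) (hh : 0 < h) (hΔ : h / 2 < Δ) (hρ : 0 ≤ ρ)
    (c : (Fin q → ℝ) × (Fin r → ℝ))
    (hgrid : ∀ z : (Fin q → ℝ) × (Fin r → ℝ),
      (∀ i, ∃ k : ℤ, z.1 i = k * h) → (∀ i, ∃ k : ℤ, z.2 i = k * h) →
      ‖z - c‖ ≤ ρ + h → Δ ≤ infDist z.1 A) :
    ∀ y : (Fin q → ℝ) × (Fin r → ℝ), ‖y - c‖ ≤ ρ → Δ ≤ infDist y.1 A :=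
  ball_safe_from_grid_safe_general q r A hAne h Δ ρ hh hΔ c hgrid
end

section
/- Let ℓ, m, γ, ε, σ̄₀, σ̄₁ ≥ 0 and h > 0, and define α(s) = 2s + 2·ε·s·ℓ + ε²·ℓ·m for s ≥ 0. Let f, g : ℝⁿ → ℝⁿ each be Lipschitz with constant ℓ with respect to the supremum norm. Let μ₁, μ₀ : ℝⁿ → ℝⁿ satisfy ‖μ₁(z) − g(z)‖ ≤ γ·σ̄₁ and ‖μ₀(z) − g(z)‖ ≤ γ·σ̄₀ for all z ∈ ℝⁿ. Suppose 4·γ·σ̄₁·ε ≤ h and let x, y ∈ ℝⁿ with ‖x − y‖ ≤ h. Then every point x̌ ∈ ℝⁿ with ‖x̌ − (x + ε·(f(x) + μ₁(x)))‖ ≤ γ·σ̄₁·ε + α(h) + 2h satisfies ‖x̌ − (y + ε·(f(y) + μ₀(y)))‖ ≤ γ·σ̄₀·ε + α(2h) + 2h; that is, closedBall(x + ε(f(x)+μ₁(x)), γσ̄₁ε + α(h) + h) + h·B̄ is contained in closedBall(y + ε(f(y)+μ₀(y)), γσ̄₀ε + α(2h) + 2h). -/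
/-! The two forward-ball centres differ by at most
`h + εℓh + ε(γσ̄₁ + ℓh + γσ̄₀)`: the states are `h` apart, `f` is `ℓ`-Lipschitz, and `μ₁`, `μ₀`
are uniform approximations of the same `ℓ`-Lipschitz `g`. Adding this to the radius of the
first ball gives the radius of the second, except for an excess `2γσ̄₁ε` (the first radius
carries `γσ̄₁ε`, the centre shift another `γσ̄₁ε`), which the extra `h` of slack absorbs since
`4γσ̄₁ε ≤ h`. -/

section

variable {E F : Type*} [SeminormedAddCommGroup E] [SeminormedAddCommGroup F]

lemma norm_add_sub_add_le (a b c d : F) : ‖a + b - (c + d)‖ ≤ ‖a - c‖ + ‖b - d‖ := by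
  rw [add_sub_add_comm]
  exact norm_add_le _ _

lemma norm_sub_le_of_uniform_approx {g μ₁ μ₀ : E → F} {ℓ δ₁ δ₀ : ℝ}
    (hg : ∀ x y, ‖g x - g y‖ ≤ ℓ * ‖x - y‖)
    (hμ₁ : ∀ z, ‖μ₁ z - g z‖ ≤ δ₁) (hμ₀ : ∀ z, ‖μ₀ z - g z‖ ≤ δ₀) (x y : E) :
    ‖μ₁ x - μ₀ y‖ ≤ δ₁ + ℓ * ‖x - y‖ + δ₀ :=
  calc ‖μ₁ x - μ₀ y‖ ≤ ‖μ₁ x - g y‖ + ‖μ₀ y - g y‖ := by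
        rw [norm_sub_rev (μ₀ y)]
        exact norm_sub_le_norm_sub_add_norm_sub _ _ _
    _ ≤ ‖μ₁ x - g x‖ + ‖g x - g y‖ + ‖μ₀ y - g y‖ := by
        gcongr
        exact norm_sub_le_norm_sub_add_norm_sub _ _ _
    _ ≤ δ₁ + ℓ * ‖x - y‖ + δ₀ := add_le_add (add_le_add (hμ₁ x) (hg x y)) (hμ₀ y)

lemma norm_add_smul_sub_add_smul_le [NormedSpace ℝ E] {ε : ℝ} (hε : 0 ≤ ε) (x y u v : E) :
    ‖(x + ε • u) - (y + ε • v)‖ ≤ ‖x - y‖ + ε * ‖u - v‖ := by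
  simpa only [← smul_sub, norm_smul_of_nonneg hε] using norm_add_sub_add_le x (ε • u) y (ε • v)

end

theorem forward_ball_refinement_general
    (n : ℕ) (ℓ m γ ε σbar₀ σbar₁ h : ℝ)
    (hℓ : 0 ≤ ℓ) (hε : 0 ≤ ε) (hh : 0 < h)
    (f g μ₁ μ₀ : (Fin n → ℝ) → (Fin n → ℝ))
    (hfLip : ∀ x y : Fin n → ℝ, ‖f x - f y‖ ≤ ℓ * ‖x - y‖)
    (hgLip : ∀ x y : Fin n → ℝ, ‖g x - g y‖ ≤ ℓ * ‖x - y‖)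
    (hμ₁ : ∀ z : Fin n → ℝ, ‖μ₁ z - g z‖ ≤ γ * σbar₁)
    (hμ₀ : ∀ z : Fin n → ℝ, ‖μ₀ z - g z‖ ≤ γ * σbar₀)
    (hsmall : 4 * γ * σbar₁ * ε ≤ h)
    (x y : Fin n → ℝ) (hxy : ‖x - y‖ ≤ h) :
    ∀ xc : Fin n → ℝ,
      ‖xc - (x + ε • (f x + μ₁ x))‖ ≤
          γ * σbar₁ * ε + (2 * h + 2 * ε * h * ℓ + ε ^ 2 * ℓ * m) + 2 * h →
      ‖xc - (y + ε • (f y + μ₀ y))‖ ≤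
          γ * σbar₀ * ε + (2 * (2 * h) + 2 * ε * (2 * h) * ℓ + ε ^ 2 * ℓ * m) + 2 * h := by
  intro xc hxc
  have hlip : ℓ * ‖x - y‖ ≤ ℓ * h := mul_le_mul_of_nonneg_left hxy hℓ
  have hdrift : ‖(f x + μ₁ x) - (f y + μ₀ y)‖ ≤ ℓ * h + (γ * σbar₁ + ℓ * h + γ * σbar₀) :=
    (norm_add_sub_add_le _ _ _ _).trans <| add_le_add ((hfLip x y).trans hlip) <|
      (norm_sub_le_of_uniform_approx hgLip hμ₁ hμ₀ x y).trans (by linarith)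
  have hcentres : ‖(x + ε • (f x + μ₁ x)) - (y + ε • (f y + μ₀ y))‖ ≤
      h + ε * (ℓ * h + (γ * σbar₁ + ℓ * h + γ * σbar₀)) :=
    (norm_add_smul_sub_add_smul_le hε _ _ _ _).trans
      (add_le_add hxy (mul_le_mul_of_nonneg_left hdrift hε))
  linarith [norm_sub_le_norm_sub_add_norm_sub xc (x + ε • (f x + μ₁ x)) (y + ε • (f y + μ₀ y))]

/-- Claim 3 in the proof of Proposition 1 of the paper: with dilation term
`α(s) = 2s + 2εsℓ + ε²ℓm` and `4γσ̄₁ε ≤ h`, the `h`-dilated one-step forward ball at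
resolution `h` around `x` is contained in the one-step forward ball at the coarser
resolution `2h` around a nearby state `y`. -/
theorem forward_ball_refinement
    (n : ℕ) (ℓ m γ ε σbar₀ σbar₁ h : ℝ)
    (hℓ : 0 ≤ ℓ) (hm : 0 ≤ m) (hγ : 0 ≤ γ) (hε : 0 ≤ ε)
    (hσ₀ : 0 ≤ σbar₀) (hσ₁ : 0 ≤ σbar₁) (hh : 0 < h)
    (f g μ₁ μ₀ : (Fin n → ℝ) → (Fin n → ℝ))
    (hfLip : ∀ x y : Fin n → ℝ, ‖f x - f y‖ ≤ ℓ * ‖x - y‖)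
    (hgLip : ∀ x y : Fin n → ℝ, ‖g x - g y‖ ≤ ℓ * ‖x - y‖)
    (hμ₁ : ∀ z : Fin n → ℝ, ‖μ₁ z - g z‖ ≤ γ * σbar₁)
    (hμ₀ : ∀ z : Fin n → ℝ, ‖μ₀ z - g z‖ ≤ γ * σbar₀)
    (hsmall : 4 * γ * σbar₁ * ε ≤ h)
    (x y : Fin n → ℝ) (hxy : ‖x - y‖ ≤ h) :
    ∀ xc : Fin n → ℝ,
      ‖xc - (x + ε • (f x + μ₁ x))‖ ≤
          γ * σbar₁ * ε + (2 * h + 2 * ε * h * ℓ + ε ^ 2 * ℓ * m) + 2 * h →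
      ‖xc - (y + ε • (f y + μ₀ y))‖ ≤
          γ * σbar₀ * ε + (2 * (2 * h) + 2 * ε * (2 * h) * ℓ + ε ^ 2 * ℓ * m) + 2 * h :=
  forward_ball_refinement_general n ℓ m γ ε σbar₀ σbar₁ h hℓ hε hh f g μ₁ μ₀ hfLip hgLip hμ₁ hμ₀
    hsmall x y hxy
end
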